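/- For every prime p with p ≡ 3 (mod 4) and p ≡ ±2 (mod 5), the multiplicative order of the class of r = −ε² in (O/pO)^* has the same 2-adic valuation as p+1; equivalently, the 2-Sylow subgroup of the cyclic group κ_p of order p+1 is contained in the subgroup generated by (r mod p). -/

import Mathlib

open Polynomial
/-- The Lagarias sequence: `x₀ = 3`, `x₁ = 1`, `x_{n+2} = x_{n+1} + x_n`. -/
def lagarias : ℕ → ℤ
  | 0 => 3
  | 1 => 1
  | n + 2 => lagarias (n + 1) + lagarias n

/-- The ring `O = ℤ[ε]` where `ε = (1+√5)/2` is a root of `X² - X - 1`;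
this is the ring of integers of `K = ℚ(√5)`. -/
noncomputable def RingO : Type := AdjoinRoot ((X : ℤ[X]) ^ 2 - X - 1)

noncomputable instance : CommRing RingO := by unfold RingO; infer_instance

/-- The golden ratio `ε = (1+√5)/2` as an element of `O = ℤ[ε]`;
its conjugate is `ε̃ = 1 - ε`. -/
noncomputable def eps : RingO := AdjoinRoot.root ((X : ℤ[X]) ^ 2 - X - 1)

section Aux

variable (p : ℕ)

/-- The polynomial `X² - X - 1` over `ZMod p`. -/
noncomputable def gpoly : (ZMod p)[X] := X ^ 2 - X - 1

variable [Fact p.Prime]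

lemma not_sq_two_three_mod5 :
    ¬ IsSquare ((2 : ℕ) : ZMod 5) ∧ ¬ IsSquare ((3 : ℕ) : ZMod 5) := by
  decide

lemma five_not_square (h4 : p % 4 = 3) (h5 : p % 5 = 2 ∨ p % 5 = 3) :
    ¬ IsSquare (5 : ZMod p) := by
  haveI : Fact (Nat.Prime 5) := ⟨by norm_num⟩
  have hp2 : p ≠ 2 := by omega
  have key := ZMod.exists_sq_eq_prime_iff_of_mod_four_eq_one (p := 5) (q := p)
    (by norm_num) hp2
  intro hsq
  have h5p : IsSquare ((5 : ℕ) : ZMod p) := by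
    simpa using hsq
  have : IsSquare ((p : ℕ) : ZMod 5) := key.mpr h5p
  rw [← ZMod.natCast_mod p 5] at this
  rcases h5 with h | h <;> rw [h] at this <;> revert this
  · exact not_sq_two_three_mod5.1
  · exact not_sq_two_three_mod5.2

lemma gpoly_natDegree : (gpoly p).natDegree = 2 := by
  unfold gpoly
  compute_degree!

lemma gpoly_irreducible (hns : ¬ IsSquare (5 : ZMod p)) : Irreducible (gpoly p) := by
  have hdeg := gpoly_natDegree p
  rw [Polynomial.irreducible_iff_roots_eq_zero_of_degree_le_three (by omega) (by omega)]
  rw [Multiset.eq_zero_iff_forall_notMem]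
  intro c hc
  have hg0 : gpoly p ≠ 0 := fun h => by simp [h] at hdeg
  rw [mem_roots hg0] at hc
  have hcc : c ^ 2 - c - 1 = 0 := by
    have := hc
    simpa [gpoly, IsRoot] using this
  exact hns ⟨2 * c - 1, by linear_combination (-4 : ZMod p) * hcc⟩

lemma root_sq : (AdjoinRoot.root (gpoly p)) ^ 2 = AdjoinRoot.root (gpoly p) + 1 := by
  unfold gpoly
  have h0 := AdjoinRoot.eval₂_root ((X : (ZMod p)[X]) ^ 2 - X - 1)
  simp only [eval₂_sub, eval₂_X_pow, eval₂_X, eval₂_one] at h0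
  linear_combination h0

lemma root_pow_p (h4 : p % 4 = 3) (hns : ¬ IsSquare (5 : ZMod p)) :
    (AdjoinRoot.root (gpoly p)) ^ p = 1 - AdjoinRoot.root (gpoly p) := by
  classical
  haveI : Fact (Irreducible (gpoly p)) := ⟨gpoly_irreducible p hns⟩
  set r : AdjoinRoot (gpoly p) := AdjoinRoot.root (gpoly p) with hrdef
  have hp3 : 3 ≤ p := by omega
  have hr2 : r ^ 2 = r + 1 := root_sq p
  have hinj : Function.Injective (algebraMap (ZMod p) (AdjoinRoot (gpoly p))) :=
    (algebraMap (ZMod p) (AdjoinRoot (gpoly p))).injective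
  haveI : CharP (AdjoinRoot (gpoly p)) p := charP_of_injective_algebraMap hinj p
  have hfrob : (r ^ p) ^ 2 = r ^ p + 1 := by
    have h1 : (r ^ 2) ^ p = (r + 1) ^ p := by rw [hr2]
    rw [add_pow_char, one_pow] at h1
    calc (r ^ p) ^ 2 = (r ^ 2) ^ p := by ring
      _ = r ^ p + 1 := h1
  have hfac : (r ^ p - r) * (r ^ p + r - 1) = 0 := by
    linear_combination hfrob - hr2
  rcases mul_eq_zero.mp hfac with h | h
  · exfalso
    have hyr : r ^ p = r := by linear_combination h
    set S : Finset (AdjoinRoot (gpoly p)) :=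
      insert r (Finset.image (algebraMap (ZMod p) (AdjoinRoot (gpoly p))) Finset.univ) with hS
    have hnotmem : r ∉ Finset.image (algebraMap (ZMod p) (AdjoinRoot (gpoly p))) Finset.univ := by
      intro hmem
      obtain ⟨c, -, hc⟩ := Finset.mem_image.mp hmem
      have heq : algebraMap (ZMod p) (AdjoinRoot (gpoly p)) (c ^ 2) =
          algebraMap (ZMod p) (AdjoinRoot (gpoly p)) (c + 1) := by
        rw [map_pow, map_add, map_one, hc]
        exact hr2
      have hcc : c ^ 2 = c + 1 := hinj heq
      exact hns ⟨2 * c - 1, by linear_combination (-4 : ZMod p) * hcc⟩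
    have hcard : S.card = p + 1 := by
      rw [hS, Finset.card_insert_of_notMem hnotmem,
        Finset.card_image_of_injective _ hinj, Finset.card_univ, ZMod.card]
    have hPz : ((X : (AdjoinRoot (gpoly p))[X]) ^ p - X) = 0 := by
      apply Polynomial.eq_zero_of_natDegree_lt_card_of_eval_eq_zero' _ S
      · intro i hi
        simp only [eval_sub, eval_pow, eval_X]
        rw [hS, Finset.mem_insert] at hi
        rcases hi with rfl | hi
        · rw [hyr, sub_self]
        · obtain ⟨c, -, rfl⟩ := Finset.mem_image.mp hi
          rw [← map_pow, ZMod.pow_card, sub_self]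
      · have hle : ((X : (AdjoinRoot (gpoly p))[X]) ^ p - X).natDegree ≤ p := by
          refine le_trans (natDegree_sub_le _ _) ?_
          rw [natDegree_X_pow, natDegree_X]
          omega
        omega
    have h1 : ((X : (AdjoinRoot (gpoly p))[X]) ^ p - X).coeff p = 1 := by
      rw [coeff_sub, coeff_X_pow, if_pos rfl, coeff_X,
        if_neg (show ¬((1 : ℕ) = p) by omega), sub_zero]
    rw [hPz, coeff_zero] at h1
    simp at h1
  · linear_combination h

end Aux

/-- For every prime `p ≡ 3 (mod 4)` with `p ≡ ±2 (mod 5)`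
(so `p` is inert in `O` and the class of `r = -ε²` lies in the kernel `κ_p` of the
norm map, cyclic of order `p+1`), the multiplicative order of the class of
`r = -ε²` in `(O/pO)^*` has the same 2-adic valuation as `p + 1`. -/
theorem two_adic_valuation_orderOf_r (p : ℕ) (hp : p.Prime) (h4 : p % 4 = 3)
    (h5 : p % 5 = 2 ∨ p % 5 = 3) :
    padicValNat 2
        (orderOf (Ideal.Quotient.mk (Ideal.span {(p : RingO)}) (-eps ^ 2))) =
      padicValNat 2 (p + 1) := by
  classical
  haveI hpf : Fact p.Prime := ⟨hp⟩
  have hp3 : 3 ≤ p := by omega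
  have hns := five_not_square p h4 h5
  haveI : Fact (Irreducible (gpoly p)) := ⟨gpoly_irreducible p hns⟩
  set F := AdjoinRoot (gpoly p) with hFdef
  set r : F := AdjoinRoot.root (gpoly p) with hrdef
  have hr2 : r ^ 2 = r + 1 := root_sq p
  have hrp : r ^ p = 1 - r := root_pow_p p h4 hns
  haveI : CharP F p :=
    charP_of_injective_algebraMap (algebraMap (ZMod p) F).injective p
  set I : Ideal RingO := Ideal.span {(p : RingO)} with hI
  set e : RingO ⧸ I := Ideal.Quotient.mk I eps with he
  -- the defining relation of ε in RingO
  have heps0 : AdjoinRoot.root ((X : ℤ[X]) ^ 2 - X - 1) ^ 2 =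
      AdjoinRoot.root ((X : ℤ[X]) ^ 2 - X - 1) + 1 := by
    have h0 := AdjoinRoot.eval₂_root ((X : ℤ[X]) ^ 2 - X - 1)
    simp only [eval₂_sub, eval₂_X_pow, eval₂_X, eval₂_one] at h0
    linear_combination h0
  have heps : eps ^ 2 = eps + 1 := heps0
  have he2 : e ^ 2 = e + 1 := by
    rw [he, ← map_pow, heps, map_add, map_one]
  -- p = 0 in the quotient
  have hpQ : ((p : ℕ) : RingO ⧸ I) = 0 := by
    rw [← map_natCast (Ideal.Quotient.mk I), Ideal.Quotient.eq_zero_iff_mem]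
    exact Ideal.subset_span (Set.mem_singleton _)
  -- the map φ : RingO ⧸ I →+* F
  have hfev : ((X : ℤ[X]) ^ 2 - X - 1).eval₂ (Int.castRingHom F) r = 0 := by
    simp only [eval₂_sub, eval₂_X_pow, eval₂_X, eval₂_one]
    linear_combination hr2
  set φ0 : RingO →+* F := AdjoinRoot.lift (Int.castRingHom F) r hfev with hφ0
  have hkill2 : ∀ a ∈ I, φ0 a = 0 := by
    intro a ha
    rw [hI, Ideal.mem_span_singleton] at ha
    obtain ⟨c, rfl⟩ := ha
    rw [map_mul, map_natCast, CharP.cast_eq_zero, zero_mul]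
  set φ : RingO ⧸ I →+* F := Ideal.Quotient.lift I φ0 hkill2 with hφ
  -- -1 ≠ 1 in the quotient
  have hne : (-1 : RingO ⧸ I) ≠ 1 := by
    intro h
    have h2 : (-1 : F) = 1 := by
      have := congrArg φ h
      rwa [map_neg, map_one] at this
    have h3 : ((2 : ℕ) : F) = 0 := by push_cast; linear_combination -h2
    rw [CharP.cast_eq_zero_iff F p 2] at h3
    have := Nat.le_of_dvd (by norm_num) h3
    omega
  -- the map ψ : F →+* RingO ⧸ I
  have hkill : ∀ a ∈ Ideal.span {((p : ℕ) : ℤ)}, (Int.castRingHom (RingO ⧸ I)) a = 0 := by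
    intro a ha
    rw [Ideal.mem_span_singleton] at ha
    obtain ⟨c, rfl⟩ := ha
    rw [map_mul]
    have hz : (Int.castRingHom (RingO ⧸ I)) ((p : ℕ) : ℤ) = 0 := by
      rw [map_natCast]
      exact hpQ
    rw [hz, zero_mul]
  set base : ZMod p →+* RingO ⧸ I :=
    (Ideal.Quotient.lift _ (Int.castRingHom (RingO ⧸ I)) hkill).comp
      (Int.quotientSpanNatEquivZMod p).symm.toRingHom with hbase
  have hgev : (gpoly p).eval₂ base e = 0 := by
    simp only [gpoly, eval₂_sub, eval₂_X_pow, eval₂_X, eval₂_one]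
    linear_combination he2
  set ψ : F →+* RingO ⧸ I := AdjoinRoot.lift base e hgev with hψ
  have hψr : ψ r = e := AdjoinRoot.lift_root hgev
  -- transfer the Frobenius relation to the quotient
  have hep : e ^ p = 1 - e := by
    have h := congrArg ψ hrp
    rwa [map_pow, map_sub, map_one, hψr] at h
  -- key power computations
  have hepp1 : e ^ (p + 1) = -1 := by
    rw [pow_succ, hep]
    linear_combination -he2
  obtain ⟨t, ht⟩ : ∃ t, p + 1 = 4 * t := ⟨(p + 1) / 4, by omega⟩
  set x : RingO ⧸ I := Ideal.Quotient.mk I (-eps ^ 2) with hx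
  have hxe : x = -e ^ 2 := by rw [hx, map_neg, map_pow, he]
  have ha_half : x ^ ((p + 1) / 2) = -1 := by
    have h2t : (p + 1) / 2 = 2 * t := by omega
    rw [hxe, h2t, pow_mul, show ((-e ^ 2) ^ 2 : RingO ⧸ I) = e ^ 4 by ring, ← pow_mul,
      show 4 * t = p + 1 from ht.symm]
    exact hepp1
  have ha_full : x ^ (p + 1) = 1 := by
    have h2 : p + 1 = (p + 1) / 2 * 2 := by omega
    rw [h2, pow_mul, ha_half]
    ring
  have hdvd : orderOf x ∣ p + 1 := orderOf_dvd_of_pow_eq_one ha_full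
  have hndvd : ¬ orderOf x ∣ (p + 1) / 2 := by
    intro h
    have h1 := orderOf_dvd_iff_pow_eq_one.mp h
    rw [ha_half] at h1
    exact hne h1
  obtain ⟨c, hc⟩ := hdvd
  have hn0 : orderOf x ≠ 0 := by
    intro h
    rw [h, zero_mul] at hc
    omega
  have hc0 : c ≠ 0 := by
    intro h
    rw [h, mul_zero] at hc
    omega
  have hcodd : ¬ 2 ∣ c := by
    rintro ⟨d, rfl⟩
    apply hndvd
    have h2 : p + 1 = 2 * (orderOf x * d) := by rw [hc]; ring
    refine ⟨d, ?_⟩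
    rw [h2]
    exact Nat.mul_div_cancel_left _ (by norm_num)
  rw [hc, padicValNat.mul hn0 hc0, padicValNat.eq_zero_of_not_dvd hcodd, add_zero]
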